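/- arXiv:2501.08093 — 7 statements merged into one kernel-verified Lean document; each statement's English description precedes it below -/
import Mathlib

section
/- Let d1, d2 ≥ 1 and let l : ℝ^{d1} × ℝ^{d2} × 𝒳 → ℝ be such that for each (ψ, γ), the function x ↦ exp(l(ψ, γ; x)) is a probability density with respect to a σ-finite measure on a measurable space 𝒳, and l is twice continuously differentiable in (ψ, γ). Let γ̄ : ℝ^{d1} × ℝ^{d2} → ℝ^{d2} be twice continuously differentiable such that for every ψ the Jacobian matrix (∂γ̄_s/∂λ_j)_{s,j=1,…,d2} is invertible, and set l̄(ψ, λ; x) = l(ψ, γ̄(ψ, λ); x). Assume that for all parameter values the γ-scores have zero mean, E_{ψ,γ̄(ψ,λ)}[∂l/∂γ_r(ψ, γ̄(ψ,λ); ·)] = 0 for all r = 1,…,d2, and that all first and second partial derivatives of l and l̄ in the parameters are integrable under the corresponding density. Then at any fixed (ψ, λ) with γ = γ̄(ψ, λ), the orthogonality condition E_{ψ,γ}[∂²l̄/∂ψ_i ∂λ_j] = 0 for all i = 1,…,d1 and j = 1,…,d2 holds if and only if ∑_{r=1}^{d2} I_{γ_r,γ_s}(ψ,γ) · ∂γ̄_r/∂ψ_i(ψ,λ)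 = −I_{ψ_i,γ_s}(ψ,γ) for all i = 1,…,d1 and s = 1,…,d2. -/
/-!
Write `l̄ = l ∘ (ψ, γ̄)`. Differentiating twice with the chain rule,
`∂²l̄/∂ψᵢ∂λⱼ = ∑ₛ (∂²l/∂ψᵢ∂γₛ + ∑ᵣ ∂²l/∂γᵣ∂γₛ · ∂γ̄ᵣ/∂ψᵢ) · ∂γ̄ₛ/∂λⱼ + ∑ₛ ∂l/∂γₛ · ∂²γ̄ₛ/∂ψᵢ∂λⱼ`.
In expectation the last sum vanishes since the `γ`-scores have mean zero, so the matrix of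
orthogonality expectations is `M J`, where `M_is = -(I_{ψᵢγₛ} + ∑ᵣ I_{γᵣγₛ} ∂γ̄ᵣ/∂ψᵢ)` and
`J = ∂γ̄/∂λ`. As `J` is invertible, `M J = 0` iff `M = 0`.
-/

open MeasureTheory

/-- Partial derivative of `F(ψ, γ)` in the `i`-th coordinate of the first argument. -/
noncomputable def pd1 {d1 d2 : ℕ} (F : (Fin d1 → ℝ) → (Fin d2 → ℝ) → ℝ)
    (i : Fin d1) (ψ : Fin d1 → ℝ) (γ : Fin d2 → ℝ) : ℝ :=
  deriv (fun t => F (Function.update ψ i t) γ) (ψ i)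

/-- Partial derivative of `F(ψ, γ)` in the `s`-th coordinate of the second argument. -/
noncomputable def pd2 {d1 d2 : ℕ} (F : (Fin d1 → ℝ) → (Fin d2 → ℝ) → ℝ)
    (s : Fin d2) (ψ : Fin d1 → ℝ) (γ : Fin d2 → ℝ) : ℝ :=
  deriv (fun t => F ψ (Function.update γ s t)) (γ s)

open Function

lemma ContinuousLinearMap.apply_prod_pi {E ι : Type*} [NormedAddCommGroup E] [NormedSpace ℝ E]
    [Fintype ι] [DecidableEq ι] (L : E × (ι → ℝ) →L[ℝ] ℝ) (u : E) (v : ι → ℝ) :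
    L (u, v) = L (u, 0) + ∑ r, v r * L (0, Pi.single r 1) := by
  have hv : ((0 : E), v) = ∑ r, v r • ((0 : E), (Pi.single r 1 : ι → ℝ)) := by
    rw [Prod.ext_iff, Prod.fst_sum, Prod.snd_sum]
    simp [← pi_eq_sum_univ' v]
  calc L (u, v) = L ((u, 0) + (0, v)) := by simp
    _ = L (u, 0) + ∑ r, v r * L (0, Pi.single r 1) := by
        rw [map_add, hv, map_sum]
        simp only [map_smul, smul_eq_mul]

section PartialDerivatives

variable {d1 d2 : ℕ} {F : (Fin d1 → ℝ) → (Fin d2 → ℝ) → ℝ} {ψ : Fin d1 → ℝ} {γ : Fin d2 → ℝ}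

lemma hasDerivAt_update_left_fderiv (hF : DifferentiableAt ℝ (uncurry F) (ψ, γ)) (i : Fin d1) :
    HasDerivAt (fun t => F (update ψ i t) γ)
      (fderiv ℝ (uncurry F) (ψ, γ) (Pi.single i 1, 0)) (ψ i) :=
  hF.hasFDerivAt.comp_hasDerivAt_of_eq (ψ i)
    ((hasDerivAt_update ψ i (ψ i)).prodMk (hasDerivAt_const _ γ)) (by simp)

lemma hasDerivAt_update_right_fderiv (hF : DifferentiableAt ℝ (uncurry F) (ψ, γ)) (s : Fin d2) :
    HasDerivAt (fun t => F ψ (update γ s t))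
      (fderiv ℝ (uncurry F) (ψ, γ) (0, Pi.single s 1)) (γ s) :=
  hF.hasFDerivAt.comp_hasDerivAt_of_eq (γ s)
    ((hasDerivAt_const _ ψ).prodMk (hasDerivAt_update γ s (γ s))) (by simp)

lemma pd1_eq_fderiv (hF : DifferentiableAt ℝ (uncurry F) (ψ, γ)) (i : Fin d1) :
    pd1 F i ψ γ = fderiv ℝ (uncurry F) (ψ, γ) (Pi.single i 1, 0) :=
  (hasDerivAt_update_left_fderiv hF i).deriv

lemma pd2_eq_fderiv (hF : DifferentiableAt ℝ (uncurry F) (ψ, γ)) (s : Fin d2) :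
    pd2 F s ψ γ = fderiv ℝ (uncurry F) (ψ, γ) (0, Pi.single s 1) :=
  (hasDerivAt_update_right_fderiv hF s).deriv

lemma hasDerivAt_pd1 (hF : DifferentiableAt ℝ (uncurry F) (ψ, γ)) (i : Fin d1) :
    HasDerivAt (fun t => F (update ψ i t) γ) (pd1 F i ψ γ) (ψ i) :=
  pd1_eq_fderiv hF i ▸ hasDerivAt_update_left_fderiv hF i

lemma hasDerivAt_pd2 (hF : DifferentiableAt ℝ (uncurry F) (ψ, γ)) (s : Fin d2) :
    HasDerivAt (fun t => F ψ (update γ s t)) (pd2 F s ψ γ) (γ s) :=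
  pd2_eq_fderiv hF s ▸ hasDerivAt_update_right_fderiv hF s

lemma contDiff_pd2 {m n : WithTop ℕ∞} (hF : ContDiff ℝ n (uncurry F)) (hmn : m + 1 ≤ n)
    (s : Fin d2) : ContDiff ℝ m (uncurry (pd2 F s)) := by
  have hdiff : Differentiable ℝ (uncurry F) :=
    (hF.of_le (le_add_self.trans hmn)).differentiable one_ne_zero
  have h : uncurry (pd2 F s) = fun q => fderiv ℝ (uncurry F) q (0, Pi.single s 1) :=
    funext fun ⟨a, b⟩ => pd2_eq_fderiv (hdiff (a, b)) s
  rw [h]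
  exact (hF.fderiv_right hmn).clm_apply contDiff_const

lemma pd1_sum_mul {ι : Type*} [Fintype ι] {f g : ι → (Fin d1 → ℝ) → (Fin d2 → ℝ) → ℝ}
    (hf : ∀ s, DifferentiableAt ℝ (uncurry (f s)) (ψ, γ))
    (hg : ∀ s, DifferentiableAt ℝ (uncurry (g s)) (ψ, γ)) (i : Fin d1) :
    pd1 (fun a b => ∑ s, f s a b * g s a b) i ψ γ
      = ∑ s, (pd1 (f s) i ψ γ * g s ψ γ + f s ψ γ * pd1 (g s) i ψ γ) := by
  have h := HasDerivAt.fun_sum (u := Finset.univ) fun s _ =>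
    (hasDerivAt_pd1 (hf s) i).mul (hasDerivAt_pd1 (hg s) i)
  simpa only [pd1, update_eq_self, Pi.mul_apply] using h.deriv

end PartialDerivatives

section ChainRule

variable {d1 d2 k : ℕ} {F : (Fin d1 → ℝ) → (Fin d2 → ℝ) → ℝ}
  {G : (Fin d1 → ℝ) → (Fin k → ℝ) → (Fin d2 → ℝ)} {ψ : Fin d1 → ℝ} {lam : Fin k → ℝ}

lemma pd1_comp (hF : DifferentiableAt ℝ (uncurry F) (ψ, G ψ lam))
    (hG : DifferentiableAt ℝ (uncurry G) (ψ, lam)) (i : Fin d1) :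
    pd1 (fun a b => F a (G a b)) i ψ lam
      = pd1 F i ψ (G ψ lam) + ∑ r, pd2 F r ψ (G ψ lam) * pd1 (fun a b => G a b r) i ψ lam := by
  have hcurve : HasDerivAt (fun t => (update ψ i t, G (update ψ i t) lam))
      (Pi.single i 1, fun r => pd1 (fun a b => G a b r) i ψ lam) (ψ i) :=
    (hasDerivAt_update ψ i (ψ i)).prodMk
      (hasDerivAt_pi.2 fun r => hasDerivAt_pd1 (F := fun a b => G a b r) (differentiableAt_pi.1 hG r) i)
  have hchain : pd1 (fun a b => F a (G a b)) i ψ lam = fderiv ℝ (uncurry F) (ψ, G ψ lam)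
      (Pi.single i 1, fun r => pd1 (fun a b => G a b r) i ψ lam) :=
    (hF.hasFDerivAt.comp_hasDerivAt_of_eq (ψ i) hcurve (by simp)).deriv
  rw [hchain, ContinuousLinearMap.apply_prod_pi, pd1_eq_fderiv hF]
  simp only [pd2_eq_fderiv hF, mul_comm]

lemma pd2_comp (hF : DifferentiableAt ℝ (uncurry F) (ψ, G ψ lam))
    (hG : DifferentiableAt ℝ (uncurry G) (ψ, lam)) (j : Fin k) :
    pd2 (fun a b => F a (G a b)) j ψ lam
      = ∑ r, pd2 F r ψ (G ψ lam) * pd2 (fun a b => G a b r) j ψ lam := by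
  have hcurve : HasDerivAt (fun t => (ψ, G ψ (update lam j t)))
      (0, fun r => pd2 (fun a b => G a b r) j ψ lam) (lam j) :=
    (hasDerivAt_const _ ψ).prodMk
      (hasDerivAt_pi.2 fun r => hasDerivAt_pd2 (F := fun a b => G a b r) (differentiableAt_pi.1 hG r) j)
  have hchain : pd2 (fun a b => F a (G a b)) j ψ lam = fderiv ℝ (uncurry F) (ψ, G ψ lam)
      (0, fun r => pd2 (fun a b => G a b r) j ψ lam) :=
    (hF.hasFDerivAt.comp_hasDerivAt_of_eq (lam j) hcurve (by simp)).deriv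
  rw [hchain, ContinuousLinearMap.apply_prod_pi, Prod.mk_zero_zero, map_zero, zero_add]
  simp only [pd2_eq_fderiv hF, mul_comm]

lemma pd1_pd2_comp (hF : ContDiff ℝ 2 (uncurry F)) (hG : ContDiff ℝ 2 (uncurry G))
    (i : Fin d1) (j : Fin k) :
    pd1 (fun a b => pd2 (fun c e => F c (G c e)) j a b) i ψ lam
      = ∑ s, ((pd1 (pd2 F s) i ψ (G ψ lam)
              + ∑ r, pd2 (pd2 F s) r ψ (G ψ lam) * pd1 (fun a b => G a b r) i ψ lam)
            * pd2 (fun a b => G a b s) j ψ lam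
          + pd2 F s ψ (G ψ lam) * pd1 (fun a b => pd2 (fun c e => G c e s) j a b) i ψ lam) := by
  have hF' : Differentiable ℝ (uncurry F) := hF.differentiable two_ne_zero
  have hG' : Differentiable ℝ (uncurry G) := hG.differentiable two_ne_zero
  have h21 : (1 : WithTop ℕ∞) + 1 ≤ 2 := by norm_num
  have hdF (s : Fin d2) : Differentiable ℝ (uncurry (pd2 F s)) :=
    (contDiff_pd2 hF h21 s).differentiable one_ne_zero
  have hdG (s : Fin d2) : Differentiable ℝ (uncurry (pd2 (fun a b => G a b s) j)) :=
    (contDiff_pd2 ((contDiff_apply ℝ ℝ s).comp hG) h21 j).differentiable one_ne_zero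
  have hdFG (s : Fin d2) :
      Differentiable ℝ (uncurry fun a b => pd2 F s a (G a b)) := fun q =>
    (hdF s _).comp q (differentiableAt_fst.prodMk (hG' q))
  have hscore : (fun a b => pd2 (fun c e => F c (G c e)) j a b)
      = fun a b => ∑ s, pd2 F s a (G a b) * pd2 (fun a b => G a b s) j a b :=
    funext₂ fun a b => pd2_comp (hF' _) (hG' _) j
  rw [hscore, pd1_sum_mul (fun s => hdFG s _) (fun s => hdG s _)]
  simp only [pd1_comp (hdF _ _) (hG' _)]

end ChainRule

lemma integral_linear_combination_of_mean_zero {𝒳 ι : Type*} [MeasurableSpace 𝒳]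
    {μ : Measure 𝒳} [Fintype ι] {ρ : 𝒳 → ℝ} (A S : ι → 𝒳 → ℝ) (B : ι → ι → 𝒳 → ℝ)
    (c J k : ι → ℝ) (hA : ∀ s, Integrable (fun x => A s x * ρ x) μ)
    (hB : ∀ r s, Integrable (fun x => B r s x * ρ x) μ)
    (hS : ∀ s, Integrable (fun x => S s x * ρ x) μ) (hS0 : ∀ s, ∫ x, S s x * ρ x ∂μ = 0) :
    ∫ x, (∑ s, ((A s x + ∑ r, B r s x * c r) * J s + S s x * k s)) * ρ x ∂μ
      = ∑ s, ((∫ x, A s x * ρ x ∂μ) + ∑ r, (∫ x, B r s x * ρ x ∂μ) * c r) * J s := by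
  have hAB (s : ι) : Integrable (fun x => A s x * ρ x + ∑ r, B r s x * ρ x * c r) μ :=
    (hA s).add (integrable_finsetSum _ fun r _ => (hB r s).mul_const _)
  have hterm (s : ι) : Integrable (fun x =>
      (A s x * ρ x + ∑ r, B r s x * ρ x * c r) * J s + S s x * ρ x * k s) μ :=
    ((hAB s).mul_const _).add ((hS s).mul_const _)
  calc ∫ x, (∑ s, ((A s x + ∑ r, B r s x * c r) * J s + S s x * k s)) * ρ x ∂μ
      = ∫ x, ∑ s, ((A s x * ρ x + ∑ r, B r s x * ρ x * c r) * J s + S s x * ρ x * k s) ∂μ := by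
        congr 1; ext x
        rw [Finset.sum_mul]
        refine Finset.sum_congr rfl fun s _ => ?_
        have hsum : ∑ r, B r s x * ρ x * c r = (∑ r, B r s x * c r) * ρ x := by
          rw [Finset.sum_mul]
          exact Finset.sum_congr rfl fun r _ => by ring
        rw [hsum]
        ring
    _ = _ := by
        rw [integral_finsetSum _ fun s _ => hterm s]
        refine Finset.sum_congr rfl fun s _ => ?_
        rw [integral_add ((hAB s).mul_const _) ((hS s).mul_const _), integral_mul_const,
          integral_mul_const, hS0, zero_mul, add_zero, integral_add (hA s)
            (integrable_finsetSum _ fun r _ => (hB r s).mul_const _),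
          integral_finsetSum _ fun r _ => (hB r s).mul_const _]
        simp only [integral_mul_const]

lemma forall_sum_mul_eq_zero_iff {m n K : Type*} [Fintype n] [DecidableEq n] [Field K]
    {J : Matrix n n K} (hJ : J.det ≠ 0) (M : m → n → K) :
    (∀ i j, ∑ s, M i s * J s j = 0) ↔ ∀ i s, M i s = 0 := by
  refine ⟨fun h i => congrFun (Matrix.eq_zero_of_vecMul_eq_zero hJ (funext (h i))), ?_⟩
  intro h i j
  simp [h]

theorem stmt0_general {d1 d2 : ℕ}
    {𝒳 : Type*} [MeasurableSpace 𝒳] (μ : Measure 𝒳)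
    (l : (Fin d1 → ℝ) → (Fin d2 → ℝ) → 𝒳 → ℝ)
    (hC2 : ∀ x, ContDiff ℝ 2 (fun q : (Fin d1 → ℝ) × (Fin d2 → ℝ) => l q.1 q.2 x))
    (γb : (Fin d1 → ℝ) → (Fin d2 → ℝ) → (Fin d2 → ℝ))
    (hγbC2 : ContDiff ℝ 2 (fun q : (Fin d1 → ℝ) × (Fin d2 → ℝ) => γb q.1 q.2))
    (hJac : ∀ ψ lam,
      (Matrix.of fun s j : Fin d2 =>
        deriv (fun t => γb ψ (Function.update lam j t) s) (lam j)).det ≠ 0)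
    -- the γ-scores have zero mean at every parameter value
    (hscore : ∀ ψ lam (r : Fin d2),
      ∫ x, pd2 (fun a b => l a b x) r ψ (γb ψ lam) *
        Real.exp (l ψ (γb ψ lam) x) ∂μ = 0)
    -- first partial derivatives of l are integrable under the corresponding density
    (hint2 : ∀ ψ γ (r : Fin d2),
      Integrable (fun x => pd2 (fun a b => l a b x) r ψ γ * Real.exp (l ψ γ x)) μ)
    -- second partial derivatives of l are integrable under the corresponding density
    (hint3 : ∀ ψ γ (i : Fin d1) (s : Fin d2),
      Integrable (fun x =>
        pd1 (fun a b => pd2 (fun c e => l c e x) s a b) i ψ γ *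
          Real.exp (l ψ γ x)) μ)
    (hint4 : ∀ ψ γ (r s : Fin d2),
      Integrable (fun x =>
        pd2 (fun a b => pd2 (fun c e => l c e x) s a b) r ψ γ *
          Real.exp (l ψ γ x)) μ)
    -- fixed parameter point
    (ψ : Fin d1 → ℝ) (lam : Fin d2 → ℝ) (γ : Fin d2 → ℝ) (hγ : γ = γb ψ lam) :
    (∀ (i : Fin d1) (j : Fin d2),
      ∫ x, pd1 (fun a b => pd2 (fun c e => l c (γb c e) x) j a b) i ψ lam *
        Real.exp (l ψ γ x) ∂μ = 0)
    ↔
    (∀ (i : Fin d1) (s : Fin d2),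
      ∑ r : Fin d2,
        (-(∫ x, pd2 (fun a b => pd2 (fun c e => l c e x) s a b) r ψ γ *
              Real.exp (l ψ γ x) ∂μ)) *
          pd1 (fun a b => γb a b r) i ψ lam
      = -(-(∫ x, pd1 (fun a b => pd2 (fun c e => l c e x) s a b) i ψ γ *
              Real.exp (l ψ γ x) ∂μ))) := by
  subst hγ
  have hexpect (i : Fin d1) (j : Fin d2) :
      ∫ x, pd1 (fun a b => pd2 (fun c e => l c (γb c e) x) j a b) i ψ lam *
        Real.exp (l ψ (γb ψ lam) x) ∂μ
      = ∑ s, ((∫ x, pd1 (fun a b => pd2 (fun c e => l c e x) s a b) i ψ (γb ψ lam) *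
              Real.exp (l ψ (γb ψ lam) x) ∂μ)
            + ∑ r, (∫ x, pd2 (fun a b => pd2 (fun c e => l c e x) s a b) r ψ (γb ψ lam) *
                Real.exp (l ψ (γb ψ lam) x) ∂μ) * pd1 (fun a b => γb a b r) i ψ lam)
          * deriv (fun t => γb ψ (Function.update lam j t) s) (lam j) := by
    have hpt (x : 𝒳) :=
      pd1_pd2_comp (F := fun c e => l c e x) (ψ := ψ) (lam := lam) (hC2 x) hγbC2 i j
    simp only [hpt]
    exact integral_linear_combination_of_mean_zero _ _ _ _ _ _ (hint3 ψ _ i) (hint4 ψ _)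
      (hint2 ψ _) (hscore ψ lam)
  simp_rw [hexpect]
  refine (forall_sum_mul_eq_zero_iff (hJac ψ lam) _).trans (forall₂_congr fun i s => ?_)
  simp only [neg_mul, Finset.sum_neg_distrib, neg_neg, neg_eq_iff_eq_neg]
  constructor <;> intro h <;> linarith

/-- **Orthogonality condition for multiple parameters of interest (Theorem 1).**
Let `exp (l ψ γ ·)` be a parametric family of densities with respect to a σ-finite
measure `μ`, twice continuously differentiable in the parameters `(ψ, γ)`, and let
`γb` be a twice continuously differentiable reparameterization `γ = γb ψ λ` whose
Jacobian in `λ` is everywhere invertible, so that `l̄(ψ, λ; x) = l(ψ, γb ψ λ; x)`.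
Assume the `γ`-scores have zero mean and the first and second partial derivatives of
`l` and `l̄` in the parameters are integrable under the corresponding density.
Then at any fixed `(ψ, λ)` with `γ = γb ψ λ`, the orthogonality condition
`E_{ψ,γ}[∂²l̄/∂ψ_i ∂λ_j] = 0` for all `i, j` holds if and only if
`∑_r I_{γ_r,γ_s} ∂γb_r/∂ψ_i = −I_{ψ_i,γ_s}` for all `i, s`, where
`I_{γ_r,γ_s} = −E_{ψ,γ}[∂²l/∂γ_r ∂γ_s]` and `I_{ψ_i,γ_s} = −E_{ψ,γ}[∂²l/∂ψ_i ∂γ_s]`. -/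
theorem stmt0 {d1 d2 : ℕ} (hd1 : 1 ≤ d1) (hd2 : 1 ≤ d2)
    {𝒳 : Type*} [MeasurableSpace 𝒳] (μ : Measure 𝒳) [SigmaFinite μ]
    (l : (Fin d1 → ℝ) → (Fin d2 → ℝ) → 𝒳 → ℝ)
    (hmeas : ∀ ψ γ, Measurable (fun x => l ψ γ x))
    (hdens : ∀ ψ γ, ∫ x, Real.exp (l ψ γ x) ∂μ = 1)
    (hC2 : ∀ x, ContDiff ℝ 2 (fun q : (Fin d1 → ℝ) × (Fin d2 → ℝ) => l q.1 q.2 x))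
    (γb : (Fin d1 → ℝ) → (Fin d2 → ℝ) → (Fin d2 → ℝ))
    (hγbC2 : ContDiff ℝ 2 (fun q : (Fin d1 → ℝ) × (Fin d2 → ℝ) => γb q.1 q.2))
    (hJac : ∀ ψ lam,
      (Matrix.of fun s j : Fin d2 =>
        deriv (fun t => γb ψ (Function.update lam j t) s) (lam j)).det ≠ 0)
    -- the γ-scores have zero mean at every parameter value
    (hscore : ∀ ψ lam (r : Fin d2),
      ∫ x, pd2 (fun a b => l a b x) r ψ (γb ψ lam) *
        Real.exp (l ψ (γb ψ lam) x) ∂μ = 0)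
    -- first partial derivatives of l are integrable under the corresponding density
    (hint1 : ∀ ψ γ (i : Fin d1),
      Integrable (fun x => pd1 (fun a b => l a b x) i ψ γ * Real.exp (l ψ γ x)) μ)
    (hint2 : ∀ ψ γ (r : Fin d2),
      Integrable (fun x => pd2 (fun a b => l a b x) r ψ γ * Real.exp (l ψ γ x)) μ)
    -- second partial derivatives of l are integrable under the corresponding density
    (hint3 : ∀ ψ γ (i : Fin d1) (s : Fin d2),
      Integrable (fun x =>
        pd1 (fun a b => pd2 (fun c e => l c e x) s a b) i ψ γ *
          Real.exp (l ψ γ x)) μ)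
    (hint4 : ∀ ψ γ (r s : Fin d2),
      Integrable (fun x =>
        pd2 (fun a b => pd2 (fun c e => l c e x) s a b) r ψ γ *
          Real.exp (l ψ γ x)) μ)
    (hint5 : ∀ ψ γ (i i' : Fin d1),
      Integrable (fun x =>
        pd1 (fun a b => pd1 (fun c e => l c e x) i' a b) i ψ γ *
          Real.exp (l ψ γ x)) μ)
    -- first partial derivatives of l̄ are integrable under the corresponding density
    (hint6 : ∀ ψ lam (i : Fin d1),
      Integrable (fun x => pd1 (fun a b => l a (γb a b) x) i ψ lam *
        Real.exp (l ψ (γb ψ lam) x)) μ)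
    (hint7 : ∀ ψ lam (j : Fin d2),
      Integrable (fun x => pd2 (fun a b => l a (γb a b) x) j ψ lam *
        Real.exp (l ψ (γb ψ lam) x)) μ)
    -- second partial derivatives of l̄ are integrable under the corresponding density
    (hint8 : ∀ ψ lam (i : Fin d1) (j : Fin d2),
      Integrable (fun x =>
        pd1 (fun a b => pd2 (fun c e => l c (γb c e) x) j a b) i ψ lam *
          Real.exp (l ψ (γb ψ lam) x)) μ)
    (hint9 : ∀ ψ lam (j j' : Fin d2),
      Integrable (fun x =>
        pd2 (fun a b => pd2 (fun c e => l c (γb c e) x) j' a b) j ψ lam *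
          Real.exp (l ψ (γb ψ lam) x)) μ)
    (hint10 : ∀ ψ lam (i i' : Fin d1),
      Integrable (fun x =>
        pd1 (fun a b => pd1 (fun c e => l c (γb c e) x) i' a b) i ψ lam *
          Real.exp (l ψ (γb ψ lam) x)) μ)
    -- fixed parameter point
    (ψ : Fin d1 → ℝ) (lam : Fin d2 → ℝ) (γ : Fin d2 → ℝ) (hγ : γ = γb ψ lam) :
    (∀ (i : Fin d1) (j : Fin d2),
      ∫ x, pd1 (fun a b => pd2 (fun c e => l c (γb c e) x) j a b) i ψ lam *
        Real.exp (l ψ γ x) ∂μ = 0)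
    ↔
    (∀ (i : Fin d1) (s : Fin d2),
      ∑ r : Fin d2,
        (-(∫ x, pd2 (fun a b => pd2 (fun c e => l c e x) s a b) r ψ γ *
              Real.exp (l ψ γ x) ∂μ)) *
          pd1 (fun a b => γb a b r) i ψ lam
      = -(-(∫ x, pd1 (fun a b => pd2 (fun c e => l c e x) s a b) i ψ γ *
              Real.exp (l ψ γ x) ∂μ))) :=
  stmt0_general μ l hC2 γb hγbC2 hJac hscore hint2 hint3 hint4 ψ lam γ hγ
end

section
/- Let ψ₀ = Γ′/Γ denote the digamma function and let λ > 0. Suppose d : (0,∞) × (0,∞) → (0,∞) is differentiable and satisfies a · exp{ψ₀(d(a,p)/p)/p} = λ for all a, p > 0. Then for all a, p > 0: (1/p²) ψ₀′(d(a,p)/p) · ∂d/∂a(a,p) = −1/a and (1/p²) ψ₀′(d(a,p)/p) · ∂d/∂p(a,p) = ψ₀(d(a,p)/p)/p² + (d(a,p)/p³) ψ₀′(d(a,p)/p). That is, the reparameterization λ = a exp{ψ₀(d/p)/p} solves the parameter-orthogonality partial differential equations for the generalized Gamma distribution with (a, p) as parameters of interest and d as nuisance parameter. -/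
/-! Taking logarithms, the constraint reads `ψ₀(d/p) = p (log λ - log a)` on the open quadrant;
differentiating this identity in `a` and in `p` by the chain rule gives the two equations. -/

/-- The digamma function `ψ₀ = Γ′/Γ`. -/
noncomputable def digamma (x : ℝ) : ℝ := deriv Real.Gamma x / Real.Gamma x

open Real Filter Topology

/- Analyticity, needed to differentiate `deriv Gamma`, is inherited from the holomorphic
complex Gamma function. -/
lemma analyticAt_Gamma_of_pos {x : ℝ} (hx : 0 < x) : AnalyticAt ℝ Gamma x := by
  have hU : IsOpen {s : ℂ | 0 < s.re} := isOpen_lt continuous_const Complex.continuous_re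
  have hA : AnalyticOnNhd ℂ Complex.Gamma {s : ℂ | 0 < s.re} := by
    refine DifferentiableOn.analyticOnNhd (fun s hs => ?_) hU
    refine (Complex.differentiableAt_Gamma s fun m hm => ?_).differentiableWithinAt
    rw [hm] at hs
    exact (Nat.cast_nonneg m).not_gt (by simpa using hs)
  have hre : Gamma = fun y : ℝ => (Complex.Gamma y).re := by
    funext y
    rw [Complex.Gamma_ofReal, Complex.ofReal_re]
  rw [hre]
  exact Complex.reCLM.analyticAt _ |>.comp <|
    (hA x (by simpa using hx)).restrictScalars.comp (Complex.ofRealCLM.analyticAt x)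

lemma differentiableAt_digamma {x : ℝ} (hx : 0 < x) : DifferentiableAt ℝ digamma x :=
  (analyticAt_Gamma_of_pos hx).deriv.differentiableAt.div
    (analyticAt_Gamma_of_pos hx).differentiableAt (Gamma_pos_of_pos hx).ne'

lemma eq_mul_sub_log_of_mul_exp_div_eq {a p y lam : ℝ} (ha : 0 < a) (hp : p ≠ 0)
    (h : a * exp (y / p) = lam) : y = p * (log lam - log a) := by
  rw [← h, log_mul ha.ne' (exp_pos _).ne', log_exp]
  field_simp
  ring

lemma deriv_mul_eq_of_comp_eventuallyEq {𝕜 : Type*} [NontriviallyNormedField 𝕜]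
    {f g h : 𝕜 → 𝕜} {x g' h' : 𝕜} (hf : DifferentiableAt 𝕜 f (g x))
    (hg : HasDerivAt g g' x) (hh : HasDerivAt h h' x) (hfgh : f ∘ g =ᶠ[𝓝 x] h) :
    deriv f (g x) * g' = h' :=
  ((hf.hasDerivAt.comp x hg).congr_of_eventuallyEq hfgh.symm).unique hh

theorem stmt2_general (lam : ℝ)
    (d : ℝ → ℝ → ℝ)
    (hpos : ∀ a p : ℝ, 0 < a → 0 < p → 0 < d a p)
    (hdiff : ∀ a p : ℝ, 0 < a → 0 < p →
      DifferentiableAt ℝ (fun q : ℝ × ℝ => d q.1 q.2) (a, p))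
    (heq : ∀ a p : ℝ, 0 < a → 0 < p →
      a * Real.exp (digamma (d a p / p) / p) = lam) :
    ∀ a p : ℝ, 0 < a → 0 < p →
      (1 / p ^ 2) * deriv digamma (d a p / p) * deriv (fun a' => d a' p) a
          = -(1 / a) ∧
      (1 / p ^ 2) * deriv digamma (d a p / p) * deriv (fun p' => d a p') p
          = digamma (d a p / p) / p ^ 2
            + d a p / p ^ 3 * deriv digamma (d a p / p) := by
  have hlog : ∀ a p : ℝ, 0 < a → 0 < p → digamma (d a p / p) = p * (log lam - log a) :=
    fun a p ha hp => eq_mul_sub_log_of_mul_exp_div_eq ha hp.ne' (heq a p ha hp)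
  intro a p ha hp
  have hψ := differentiableAt_digamma (div_pos (hpos a p ha hp) hp)
  have hda : DifferentiableAt ℝ (fun a' => d a' p) a :=
    (hdiff a p ha hp).comp (f := fun a' : ℝ => (a', p)) a
      (differentiableAt_id.prodMk (differentiableAt_const p))
  have hdp : DifferentiableAt ℝ (fun p' => d a p') p :=
    (hdiff a p ha hp).comp (f := fun p' : ℝ => (a, p')) p
      ((differentiableAt_const a).prodMk differentiableAt_id)
  have eq_a := deriv_mul_eq_of_comp_eventuallyEq (g := fun a' => d a' p / p) hψ
    (hda.hasDerivAt.div_const p)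
    (((hasDerivAt_log ha.ne').const_sub (log lam)).const_mul p)
    (by filter_upwards [eventually_gt_nhds ha] with a' ha' using hlog a' p ha' hp)
  have eq_p := deriv_mul_eq_of_comp_eventuallyEq (g := fun p' => d a p' / p') hψ
    (hdp.hasDerivAt.div (hasDerivAt_id p) hp.ne')
    ((hasDerivAt_id p).mul_const (log lam - log a))
    (by filter_upwards [eventually_gt_nhds hp] with p' hp' using hlog a p' ha hp')
  constructor
  · field_simp at eq_a ⊢
    linear_combination eq_a
  · rw [hlog a p ha hp]
    field_simp at eq_p ⊢
    linear_combination eq_p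

/-- The reparameterization `λ = a · exp{ψ₀(d/p)/p}` solves the parameter-orthogonality
partial differential equations for the generalized Gamma distribution with `(a, p)` as
parameters of interest and `d` as nuisance parameter. -/
theorem stmt2 (lam : ℝ) (hlam : 0 < lam)
    (d : ℝ → ℝ → ℝ)
    (hpos : ∀ a p : ℝ, 0 < a → 0 < p → 0 < d a p)
    (hdiff : ∀ a p : ℝ, 0 < a → 0 < p →
      DifferentiableAt ℝ (fun q : ℝ × ℝ => d q.1 q.2) (a, p))
    (heq : ∀ a p : ℝ, 0 < a → 0 < p →
      a * Real.exp (digamma (d a p / p) / p) = lam) :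
    ∀ a p : ℝ, 0 < a → 0 < p →
      (1 / p ^ 2) * deriv digamma (d a p / p) * deriv (fun a' => d a' p) a
          = -(1 / a) ∧
      (1 / p ^ 2) * deriv digamma (d a p / p) * deriv (fun p' => d a p') p
          = digamma (d a p / p) / p ^ 2
            + d a p / p ^ 3 * deriv digamma (d a p / p) :=
  stmt2_general lam d hpos hdiff heq
end

section
/- For the location-scale family f(x; μ, σ, θ) = σ^{−1} g((x−μ)/σ; θ) with g(·; θ) even, the location parameter μ is orthogonal to both σ and θ: for all μ ∈ ℝ, σ > 0, θ ∈ Θ, assuming the integrands are integrable, ∫_ℝ (∂ log f/∂μ)(x) (∂ log f/∂σ)(x) f(x; μ, σ, θ) dx = 0 and ∫_ℝ (∂ log f/∂μ)(x) (∂ log f/∂θ)(x) f(x; μ, σ, θ) dx = 0. -/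
open MeasureTheory

/-- Location-scale family density `f(x; μ, σ, θ) = σ⁻¹ g((x−μ)/σ; θ)`. -/
noncomputable def lsPdf (g : ℝ → ℝ → ℝ) (μ σ θ x : ℝ) : ℝ :=
  σ⁻¹ * g ((x - μ) / σ) θ

/-- `f1(θ) = ∫ z (∂g/∂z)(z;θ)(∂g/∂θ)(z;θ)/g(z;θ) dz`. -/
noncomputable def f1 (g : ℝ → ℝ → ℝ) (θ : ℝ) : ℝ :=
  ∫ z : ℝ, z * deriv (fun w => g w θ) z * deriv (fun t => g z t) θ / g z θ

/-- `f2(θ) = ∫ z² ((∂g/∂z)(z;θ))²/g(z;θ) dz + 2 ∫ z (∂g/∂z)(z;θ) dz + 1`. -/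
noncomputable def f2 (g : ℝ → ℝ → ℝ) (θ : ℝ) : ℝ :=
  (∫ z : ℝ, z ^ 2 * (deriv (fun w => g w θ) z) ^ 2 / g z θ) +
    2 * (∫ z : ℝ, z * deriv (fun w => g w θ) z) + 1

/-- `f3(θ) = ∫ ((∂g/∂θ)(z;θ))²/g(z;θ) dz`. -/
noncomputable def f3 (g : ℝ → ℝ → ℝ) (θ : ℝ) : ℝ :=
  ∫ z : ℝ, (deriv (fun t => g z t) θ) ^ 2 / g z θ

/-- In the location-scale family with `g(·;θ)` even, the location parameter `μ` is
orthogonal to both `σ` and `θ`. -/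
theorem stmt3
    (Θ : Set ℝ) (hΘopen : IsOpen Θ) (hΘord : Θ.OrdConnected)
    (g : ℝ → ℝ → ℝ)
    (hgpos : ∀ z θ : ℝ, θ ∈ Θ → 0 < g z θ)
    (hgdens : ∀ θ ∈ Θ, ∫ z : ℝ, g z θ = 1)
    (hgeven : ∀ z θ : ℝ, θ ∈ Θ → g (-z) θ = g z θ)
    (hgC1 : ContDiffOn ℝ 1 (fun q : ℝ × ℝ => g q.1 q.2) (Set.univ ×ˢ Θ))
    (μ σ θ : ℝ) (hσ : 0 < σ) (hθ : θ ∈ Θ)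
    (hint1 : Integrable (fun x : ℝ =>
      deriv (fun m => Real.log (lsPdf g m σ θ x)) μ *
        deriv (fun s => Real.log (lsPdf g μ s θ x)) σ * lsPdf g μ σ θ x))
    (hint2 : Integrable (fun x : ℝ =>
      deriv (fun m => Real.log (lsPdf g m σ θ x)) μ *
        deriv (fun t => Real.log (lsPdf g μ σ t x)) θ * lsPdf g μ σ θ x)) :
    (∫ x : ℝ, deriv (fun m => Real.log (lsPdf g m σ θ x)) μ *
        deriv (fun s => Real.log (lsPdf g μ s θ x)) σ * lsPdf g μ σ θ x = 0) ∧
    (∫ x : ℝ, deriv (fun m => Real.log (lsPdf g m σ θ x)) μ *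
        deriv (fun t => Real.log (lsPdf g μ σ t x)) θ * lsPdf g μ σ θ x = 0) := by
  -- Symmetry x ↦ 2μ - x.
  have hf : ∀ x : ℝ, lsPdf g μ σ θ (2*μ - x) = lsPdf g μ σ θ x := by
    intro x
    simp only [lsPdf]
    have h : (2*μ - x - μ) / σ = -((x - μ) / σ) := by ring
    rw [h, hgeven _ _ hθ]
  have hm : ∀ x : ℝ, deriv (fun m => Real.log (lsPdf g m σ θ (2*μ - x))) μ =
      - deriv (fun m => Real.log (lsPdf g m σ θ x)) μ := by
    intro x
    have hfun : (fun m => Real.log (lsPdf g m σ θ (2*μ - x))) =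
        fun m => (fun m' => Real.log (lsPdf g m' σ θ x)) (2*μ - m) := by
      funext m
      simp only [lsPdf]
      have h : (2*μ - x - m) / σ = -((x - (2*μ - m)) / σ) := by ring
      rw [h, hgeven _ _ hθ]
    rw [hfun]
    have h2 := deriv_comp_const_sub (fun m' => Real.log (lsPdf g m' σ θ x)) (2*μ) μ
    rw [show 2*μ - μ = μ by ring] at h2
    exact h2
  have hs : ∀ x : ℝ, deriv (fun s => Real.log (lsPdf g μ s θ (2*μ - x))) σ =
      deriv (fun s => Real.log (lsPdf g μ s θ x)) σ := by
    intro x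
    congr 1
    funext s
    simp only [lsPdf]
    have h : (2*μ - x - μ) / s = -((x - μ) / s) := by ring
    rw [h, hgeven _ _ hθ]
  have ht : ∀ x : ℝ, deriv (fun t => Real.log (lsPdf g μ σ t (2*μ - x))) θ =
      deriv (fun t => Real.log (lsPdf g μ σ t x)) θ := by
    intro x
    apply Filter.EventuallyEq.deriv_eq
    filter_upwards [hΘopen.mem_nhds hθ] with t htΘ
    simp only [lsPdf]
    have h : (2*μ - x - μ) / σ = -((x - μ) / σ) := by ring
    rw [h, hgeven _ _ htΘ]
  have odd_int : ∀ F : ℝ → ℝ, (∀ x, F (2*μ - x) = - F x) → (∫ x : ℝ, F x) = 0 := by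
    intro F hF
    have h1 : (∫ x : ℝ, F (2*μ - x)) = ∫ x : ℝ, F x :=
      integral_sub_left_eq_self F volume (2*μ)
    simp only [hF, integral_neg] at h1
    linarith
  constructor
  · apply odd_int
    intro x
    rw [hm x, hs x, hf x]
    ring
  · apply odd_int
    intro x
    rw [hm x, ht x, hf x]
    ring
end

section
/- Suppose f1(θ) ≠ 0 for all θ ∈ Θ and let F1 : Θ → ℝ be differentiable with F1′(θ) = f3(θ)/f1(θ). Let λ > 0 and let θ̂ : (0,∞) → Θ be differentiable with σ · exp{−F1(θ̂(σ))} = λ for all σ > 0. Then f3(θ̂(σ)) · θ̂′(σ) = f1(θ̂(σ))/σ for all σ > 0; that is, the reparameterization λ = σ exp{−F1(θ)} solves the parameter-orthogonality partial differential equations f3(θ) ∂θ/∂μ = 0 and f3(θ) ∂θ/∂σ = f1(θ)/σ arising when (μ, σ) are the parameters of interest and θ is the nuisance parameter in the location-scale family. -/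
open MeasureTheory

/-- The reparameterization `λ = σ exp{−F1(θ)}` (with `F1′ = f3/f1`) solves the
parameter-orthogonality partial differential equations `f3(θ) ∂θ/∂μ = 0` and
`f3(θ) ∂θ/∂σ = f1(θ)/σ` arising when `(μ, σ)` are the parameters of interest and
`θ` is the nuisance parameter in the location-scale family. -/
theorem stmt6
    (Θ : Set ℝ) (hΘopen : IsOpen Θ) (hΘord : Θ.OrdConnected)
    (g : ℝ → ℝ → ℝ)
    (hgpos : ∀ z θ : ℝ, θ ∈ Θ → 0 < g z θ)
    (hgdens : ∀ θ ∈ Θ, ∫ z : ℝ, g z θ = 1)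
    (hgeven : ∀ z θ : ℝ, θ ∈ Θ → g (-z) θ = g z θ)
    (hgC1 : ContDiffOn ℝ 1 (fun q : ℝ × ℝ => g q.1 q.2) (Set.univ ×ˢ Θ))
    (hf1ne : ∀ θ ∈ Θ, f1 g θ ≠ 0)
    (F1 : ℝ → ℝ)
    (hF1 : ∀ θ ∈ Θ, HasDerivAt F1 (f3 g θ / f1 g θ) θ)
    (lam : ℝ) (hlam : 0 < lam)
    (θhat : ℝ → ℝ)
    (hθhatmem : ∀ σ : ℝ, 0 < σ → θhat σ ∈ Θ)
    (hθhatdiff : ∀ σ : ℝ, 0 < σ → DifferentiableAt ℝ θhat σ)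
    (heq : ∀ σ : ℝ, 0 < σ → σ * Real.exp (-F1 (θhat σ)) = lam) :
    ∀ σ : ℝ, 0 < σ → f3 g (θhat σ) * deriv θhat σ = f1 g (θhat σ) / σ := by
  intro σ hσ
  have htΘ : θhat σ ∈ Θ := hθhatmem σ hσ
  have hF := hF1 (θhat σ) htΘ
  have hθd := (hθhatdiff σ hσ).hasDerivAt
  have hcomp : HasDerivAt (fun s => F1 (θhat s)) (f3 g (θhat σ) / f1 g (θhat σ) * deriv θhat σ) σ :=
    hF.comp σ hθd
  have hexp : HasDerivAt (fun s => Real.exp (-F1 (θhat s)))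
      (Real.exp (-F1 (θhat σ)) * (-(f3 g (θhat σ) / f1 g (θhat σ) * deriv θhat σ))) σ :=
    (Real.hasDerivAt_exp _).comp σ hcomp.neg
  have hprod : HasDerivAt (fun s => s * Real.exp (-F1 (θhat s)))
      (1 * Real.exp (-F1 (θhat σ)) +
        σ * (Real.exp (-F1 (θhat σ)) * (-(f3 g (θhat σ) / f1 g (θhat σ) * deriv θhat σ)))) σ :=
    (hasDerivAt_id σ).mul hexp
  have hconst : (fun s => s * Real.exp (-F1 (θhat s))) =ᶠ[nhds σ] fun _ => lam := by
    filter_upwards [Ioi_mem_nhds hσ] with s hs using heq s hs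
  have h0 : HasDerivAt (fun s => s * Real.exp (-F1 (θhat s))) 0 σ :=
    (hasDerivAt_const σ lam).congr_of_eventuallyEq hconst
  have hD := hprod.unique h0
  have hE : (0:ℝ) < Real.exp (-F1 (θhat σ)) := Real.exp_pos _
  have hf1 : f1 g (θhat σ) ≠ 0 := hf1ne (θhat σ) htΘ
  have hσne : σ ≠ 0 := ne_of_gt hσ
  field_simp at hD ⊢
  nlinarith [hD, hE, hf1, sq_nonneg (Real.exp (-F1 (θhat σ)))]
end

section
/- Suppose f2(θ) ≠ 0 for all θ ∈ Θ and let F2 : Θ → ℝ be differentiable with F2′(θ) = f1(θ)/f2(θ). Let λ > 0 and let σ̂ : Θ → (0,∞) be differentiable with σ̂(θ) · exp{−F2(θ)} = λ for all θ ∈ Θ. Then (f2(θ)/σ̂(θ)²) · σ̂′(θ) = f1(θ)/σ̂(θ) for all θ ∈ Θ; that is, the reparameterization λ = σ exp{−F2(θ)} solves the parameter-orthogonality partial differential equation arising when (μ, θ) are the parameters of interest and σ is the nuisance parameter in the location-scale family. -/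
open MeasureTheory

/-- The reparameterization `λ = σ exp{−F2(θ)}` (with `F2′ = f1/f2`) solves the
parameter-orthogonality partial differential equation arising when `(μ, θ)` are the
parameters of interest and `σ` is the nuisance parameter in the location-scale
family: `(f2(θ)/σ̂(θ)²) σ̂′(θ) = f1(θ)/σ̂(θ)`. -/
theorem stmt7
    (Θ : Set ℝ) (hΘopen : IsOpen Θ) (hΘord : Θ.OrdConnected)
    (g : ℝ → ℝ → ℝ)
    (hgpos : ∀ z θ : ℝ, θ ∈ Θ → 0 < g z θ)
    (hgdens : ∀ θ ∈ Θ, ∫ z : ℝ, g z θ = 1)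
    (hgeven : ∀ z θ : ℝ, θ ∈ Θ → g (-z) θ = g z θ)
    (hgC1 : ContDiffOn ℝ 1 (fun q : ℝ × ℝ => g q.1 q.2) (Set.univ ×ˢ Θ))
    (hf2ne : ∀ θ ∈ Θ, f2 g θ ≠ 0)
    (F2 : ℝ → ℝ)
    (hF2 : ∀ θ ∈ Θ, HasDerivAt F2 (f1 g θ / f2 g θ) θ)
    (lam : ℝ) (hlam : 0 < lam)
    (σhat : ℝ → ℝ)
    (hσhatpos : ∀ θ ∈ Θ, 0 < σhat θ)
    (hσhatdiff : ∀ θ ∈ Θ, DifferentiableAt ℝ σhat θ)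
    (heq : ∀ θ ∈ Θ, σhat θ * Real.exp (-F2 θ) = lam) :
    ∀ θ ∈ Θ, f2 g θ / (σhat θ) ^ 2 * deriv σhat θ = f1 g θ / σhat θ := by
  intro θ hθ
  have hσ := hσhatpos θ hθ
  have hσne : σhat θ ≠ 0 := ne_of_gt hσ
  have hf2 := hf2ne θ hθ
  have hexp : Real.exp (-F2 θ) ≠ 0 := Real.exp_ne_zero _
  -- derivative of the constant product
  have hd : HasDerivAt (fun t => σhat t * Real.exp (-F2 t))
      (deriv σhat θ * Real.exp (-F2 θ) +
        σhat θ * (Real.exp (-F2 θ) * -(f1 g θ / f2 g θ))) θ := by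
    exact (hσhatdiff θ hθ).hasDerivAt.mul ((hF2 θ hθ).neg.exp)
  have hconst : HasDerivAt (fun t => σhat t * Real.exp (-F2 t)) 0 θ := by
    have h0 : HasDerivAt (fun _ : ℝ => lam) 0 θ := hasDerivAt_const θ lam
    refine h0.congr_of_eventuallyEq ?_
    filter_upwards [hΘopen.mem_nhds hθ] with t ht
    exact heq t ht
  have hzero := hd.unique hconst
  have hderiv : deriv σhat θ = σhat θ * (f1 g θ / f2 g θ) := by
    have h2 : deriv σhat θ * Real.exp (-F2 θ) =
        σhat θ * (f1 g θ / f2 g θ) * Real.exp (-F2 θ) := by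
      linear_combination hzero
    exact mul_right_cancel₀ hexp h2
  rw [hderiv]
  field_simp
end

section
/- Let X1 and X2 be independent with X_i having the inverse-Gamma density f(x_i; α_i, β) = β^{α_i}/Γ(α_i) · x_i^{−α_i−1} e^{−β/x_i}, x_i > 0, sharing the scale β > 0. Reparameterize β = (α1 + α2)/λ with λ > 0, and let ℓ̄(α1, α2, λ; x1, x2) = log f(x1; α1, (α1+α2)/λ) + log f(x2; α2, (α1+α2)/λ) be the joint log-likelihood in (α1, α2, λ). Then for all α1, α2, λ > 0 and i = 1, 2: ∫_0^∞ ∫_0^∞ (∂ℓ̄/∂α_i)(∂ℓ̄/∂λ) e^{ℓ̄} dx1 dx2 = 0; that is, the reparameterization λ = (α1 + α2)/β makes the shape parameters α1 and α2 globally orthogonal to λ. -/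
/-
Put `b = (α₁ + α₂) / λ`. The `λ`-score is `(b / λ) · ((1/x₁ − α₁/b) + (1/x₂ − α₂/b))`, a sum of
reciprocals centred under the model, while each `αᵢ`-score is `k + u₁ log x₁ + v₁/x₁ + u₂ log x₂ +
v₂/x₂`. Since the density factorizes, the cross moment reduces to one-dimensional inverse-Gamma
moments, and those follow from the shift identity
`(1/x − α/b) f(x; α, b) = (α/b) (f(x; α + 1, b) − f(x; α, b))` together with
`E[log X] = log b − ψ(α)` (substitute `x = b/t` and differentiate the Gamma integral) and
`ψ(α + 1) = ψ(α) + 1/α`: one gets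
`E[(k + u log X + v/X)(1/X − α/b)] = vα/b² − u/b`. Summed over the two coordinates and multiplied
by `b/λ`, this is `(v₁α₁ + v₂α₂)/(α₁ + α₂) − (u₁ + u₂)/λ`, which vanishes for the `αᵢ`-scores
(`v₁ = v₂ = −1/λ`, `u₁ + u₂ = −1`).
-/

open MeasureTheory

/-- The inverse-Gamma density with shape `α` and scale `β`:
`f(x; α, β) = β^α/Γ(α) · x^{−α−1} e^{−β/x}`, `x > 0`. -/
noncomputable def invGammaPdf (α β x : ℝ) : ℝ :=
  β ^ α / Real.Gamma α * x ^ (-α - 1) * Real.exp (-β / x)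

/-- The joint log-likelihood of two independent inverse-Gamma observations sharing the
scale, in the reparameterization `β = (α₁+α₂)/λ`. -/
noncomputable def invGammaLbar (α₁ α₂ lam x₁ x₂ : ℝ) : ℝ :=
  Real.log (invGammaPdf α₁ ((α₁ + α₂) / lam) x₁) +
    Real.log (invGammaPdf α₂ ((α₁ + α₂) / lam) x₂)

open Real Set

lemma abs_log_le_rpow_add_rpow_neg {t ε : ℝ} (ht : 0 < t) (hε : 0 < ε) :
    |log t| ≤ (t ^ ε + t ^ (-ε)) / ε := by
  rcases le_total 1 t with h1 | h1
  · rw [abs_of_nonneg (log_nonneg h1)]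
    have := log_le_rpow_div ht.le hε
    have : 0 ≤ t ^ (-ε) / ε := by positivity
    rw [add_div]; linarith
  · rw [abs_of_nonpos (log_nonpos ht.le h1), ← log_inv]
    have := log_le_rpow_div (inv_pos.2 ht).le hε
    rw [inv_rpow ht.le, ← rpow_neg ht.le] at this
    have : 0 ≤ t ^ ε / ε := by positivity
    rw [add_div]; linarith

lemma integrableOn_log_mul_Gamma_integrand {s : ℝ} (hs : 0 < s) :
    IntegrableOn (fun t => log t * (exp (-t) * t ^ (s - 1))) (Ioi 0) := by
  set ε := s / 2
  have hε : 0 < ε := by positivity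
  have hbound : IntegrableOn (fun t => (exp (-t) * t ^ (s + ε - 1) +
      exp (-t) * t ^ (s - ε - 1)) / ε) (Ioi 0) :=
    ((GammaIntegral_convergent (by positivity)).add
      (GammaIntegral_convergent (by simp only [ε]; linarith))).div_const ε
  refine hbound.mono' ?_ ((ae_restrict_iff' measurableSet_Ioi).2 (ae_of_all _ fun t ht => ?_))
  · exact (ContinuousOn.mul (continuousOn_log.mono fun t ht => (ne_of_gt ht))
      ((continuous_exp.comp continuous_neg).continuousOn.mul
        (continuousOn_id.rpow_const fun t ht => Or.inl (ne_of_gt ht)))).aestronglyMeasurable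
      measurableSet_Ioi
  · have ht : 0 < t := ht
    rw [norm_mul, Real.norm_eq_abs, Real.norm_of_nonneg (by positivity)]
    calc |log t| * (exp (-t) * t ^ (s - 1))
        ≤ (t ^ ε + t ^ (-ε)) / ε * (exp (-t) * t ^ (s - 1)) := by
          gcongr; exact abs_log_le_rpow_add_rpow_neg ht hε
      _ = _ := by
          rw [show s + ε - 1 = ε + (s - 1) by ring, show s - ε - 1 = -ε + (s - 1) by ring,
            rpow_add ht, rpow_add ht]
          ring

lemma hasDerivAt_Gamma_eq_integral {s : ℝ} (hs : 0 < s) :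
    HasDerivAt Gamma (∫ t in Ioi 0, log t * (exp (-t) * t ^ (s - 1))) s := by
  have hC := (Complex.hasDerivAt_GammaIntegral (s := s) (by simpa using hs)).real_of_complex
  have hre : (∫ t : ℝ in Ioi 0, (t : ℂ) ^ ((s : ℂ) - 1) * ((log t : ℂ) * (exp (-t) : ℂ))).re =
      ∫ t in Ioi 0, log t * (exp (-t) * t ^ (s - 1)) := by
    rw [setIntegral_congr_fun measurableSet_Ioi (g := fun t : ℝ =>
        ((log t * (exp (-t) * t ^ (s - 1)) : ℝ) : ℂ)) fun t ht => ?_, integral_complex_ofReal,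
      Complex.ofReal_re]
    rw [show (s : ℂ) - 1 = ((s - 1 : ℝ) : ℂ) by push_cast; ring,
      ← Complex.ofReal_cpow (le_of_lt ht)]
    push_cast; ring
  rw [hre] at hC
  refine hC.congr_of_eventuallyEq ?_
  filter_upwards [Ioi_mem_nhds hs] with x hx
  rw [← Complex.Gamma_eq_integral (by simpa using hx), Complex.Gamma_ofReal, Complex.ofReal_re]

lemma logDeriv_Gamma_add_one {s : ℝ} (hs : 0 < s) :
    logDeriv Gamma (s + 1) = logDeriv Gamma s + s⁻¹ := by
  have hdiff : ∀ x : ℝ, 0 < x → DifferentiableAt ℝ Gamma x := fun x hx =>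
    differentiableOn_Gamma_Ioi.differentiableAt (Ioi_mem_nhds hx)
  have hshift := (hdiff (s + 1) (by linarith)).hasDerivAt.comp_add_const s 1
  have hprod := (hasDerivAt_id s).mul (hdiff s hs).hasDerivAt
  have hderiv := hshift.unique (hprod.congr_of_eventuallyEq (by
    filter_upwards [Ioi_mem_nhds hs] with x hx using Gamma_add_one (ne_of_gt hx)))
  have hΓ := (Gamma_pos_of_pos hs).ne'
  rw [logDeriv_apply, logDeriv_apply, hderiv, Gamma_add_one hs.ne']
  simp only [id, one_mul]
  field_simp
  ring

lemma hasDerivAt_log_Gamma {s : ℝ} (hs : 0 < s) :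
    HasDerivAt (fun a => log (Gamma a)) (logDeriv Gamma s) s :=
  (differentiableOn_Gamma_Ioi.differentiableAt (Ioi_mem_nhds hs)).hasDerivAt.log
    (Gamma_pos_of_pos hs).ne'

section Substitution

variable {b : ℝ}

lemma image_const_div_Ioi (hb : 0 < b) : (fun t : ℝ => b / t) '' Ioi 0 = Ioi 0 :=
  Set.ext fun y => ⟨by rintro ⟨t, ht, rfl⟩; exact div_pos hb ht,
    fun hy => ⟨b / y, div_pos hb hy, div_div_cancel₀ hb.ne'⟩⟩

lemma hasDerivWithinAt_const_div_Ioi :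
    ∀ t ∈ Ioi (0 : ℝ), HasDerivWithinAt (fun t : ℝ => b / t) (-b / t ^ 2) (Ioi 0) t := by
  intro t ht
  have := (hasDerivAt_inv (ne_of_gt ht)).const_mul b
  exact (by simpa [div_eq_mul_inv, neg_div] using this : HasDerivAt _ _ t).hasDerivWithinAt

lemma injOn_const_div_Ioi (hb : 0 < b) : InjOn (fun t : ℝ => b / t) (Ioi 0) := fun s _ t _ h =>
  inv_injective (mul_left_cancel₀ hb.ne' (by simpa [div_eq_mul_inv] using h))

lemma integral_comp_const_div_Ioi (hb : 0 < b) (g : ℝ → ℝ) :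
    ∫ t in Ioi (0 : ℝ), b / t ^ 2 * g (b / t) = ∫ x in Ioi (0 : ℝ), g x := by
  conv_rhs => rw [← image_const_div_Ioi hb]
  rw [integral_image_eq_integral_abs_deriv_smul measurableSet_Ioi
    hasDerivWithinAt_const_div_Ioi (injOn_const_div_Ioi hb)]
  refine setIntegral_congr_fun measurableSet_Ioi fun t ht => ?_
  rw [smul_eq_mul, abs_div, abs_neg, abs_of_pos hb, abs_of_pos (pow_pos ht 2)]

lemma integrableOn_comp_const_div_Ioi_iff (hb : 0 < b) (g : ℝ → ℝ) :
    IntegrableOn (fun t => b / t ^ 2 * g (b / t)) (Ioi 0) ↔ IntegrableOn g (Ioi 0) := by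
  conv_rhs => rw [← image_const_div_Ioi hb]
  rw [integrableOn_image_iff_integrableOn_abs_deriv_smul
    measurableSet_Ioi hasDerivWithinAt_const_div_Ioi (injOn_const_div_Ioi hb)]
  refine integrableOn_congr_fun (fun t ht => ?_) measurableSet_Ioi
  rw [smul_eq_mul, abs_div, abs_neg, abs_of_pos hb, abs_of_pos (pow_pos ht 2)]

end Substitution

section InverseGamma

variable {α b : ℝ}

lemma invGammaPdf_pos (hα : 0 < α) (hb : 0 < b) {x : ℝ} (hx : 0 < x) :
    0 < invGammaPdf α b x := by
  have := Gamma_pos_of_pos hα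
  unfold invGammaPdf
  positivity

lemma const_div_sq_mul_invGammaPdf_const_div (hα : 0 < α) (hb : 0 < b) {t : ℝ} (ht : 0 < t) :
    b / t ^ 2 * invGammaPdf α b (b / t) = exp (-t) * t ^ (α - 1) / Gamma α := by
  have hΓ := (Gamma_pos_of_pos hα).ne'
  have hpow : (b / t) ^ (-α - 1) = t ^ (α - 1) * t ^ 2 / (b ^ α * b) := by
    rw [show -α - 1 = -(α + 1) by ring, rpow_neg (div_pos hb ht).le, div_rpow hb.le ht.le,
      inv_div, rpow_add_one hb.ne', show α + 1 = α - 1 + 2 by ring, rpow_add ht, rpow_two]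
  rw [invGammaPdf, hpow, neg_div, div_div_cancel₀ hb.ne']
  have : 0 < b ^ α := rpow_pos_of_pos hb α
  field_simp

lemma integral_mul_invGammaPdf (hα : 0 < α) (hb : 0 < b) (h : ℝ → ℝ) :
    ∫ x in Ioi 0, h x * invGammaPdf α b x =
      (∫ t in Ioi 0, h (b / t) * (exp (-t) * t ^ (α - 1))) / Gamma α := by
  rw [← integral_comp_const_div_Ioi hb, ← integral_div]
  refine setIntegral_congr_fun measurableSet_Ioi fun t ht => ?_
  rw [mul_left_comm, const_div_sq_mul_invGammaPdf_const_div hα hb ht]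
  ring

lemma integrableOn_mul_invGammaPdf_iff (hα : 0 < α) (hb : 0 < b) (h : ℝ → ℝ) :
    IntegrableOn (fun x => h x * invGammaPdf α b x) (Ioi 0) ↔
      IntegrableOn (fun t => h (b / t) * (exp (-t) * t ^ (α - 1))) (Ioi 0) := by
  rw [← integrableOn_comp_const_div_Ioi_iff hb]
  refine Iff.trans ?_ (integrable_mul_const_iff
    (isUnit_iff_ne_zero.2 (inv_ne_zero (Gamma_pos_of_pos hα).ne')) _)
  refine integrableOn_congr_fun (fun t ht => ?_) measurableSet_Ioi
  rw [mul_left_comm, const_div_sq_mul_invGammaPdf_const_div hα hb ht]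
  ring

lemma integrableOn_invGammaPdf (hα : 0 < α) (hb : 0 < b) :
    IntegrableOn (invGammaPdf α b) (Ioi 0) := by
  simpa using (integrableOn_mul_invGammaPdf_iff hα hb fun _ => 1).2
    (by simpa using GammaIntegral_convergent hα)

lemma integral_invGammaPdf (hα : 0 < α) (hb : 0 < b) :
    ∫ x in Ioi 0, invGammaPdf α b x = 1 := by
  simpa [← Gamma_eq_integral hα, (Gamma_pos_of_pos hα).ne'] using
    integral_mul_invGammaPdf hα hb fun _ => 1

lemma integrableOn_log_mul_invGammaPdf (hα : 0 < α) (hb : 0 < b) :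
    IntegrableOn (fun x => log x * invGammaPdf α b x) (Ioi 0) := by
  refine (integrableOn_mul_invGammaPdf_iff hα hb log).2 <| IntegrableOn.congr_fun
    (((GammaIntegral_convergent hα).const_mul (log b)).sub
      (integrableOn_log_mul_Gamma_integrand hα)) (fun t ht => ?_) measurableSet_Ioi
  rw [Pi.sub_apply, log_div hb.ne' (ne_of_gt ht)]
  ring

lemma integral_log_mul_invGammaPdf (hα : 0 < α) (hb : 0 < b) :
    ∫ x in Ioi 0, log x * invGammaPdf α b x = log b - logDeriv Gamma α := by
  have hsplit : ∫ t in Ioi 0, log (b / t) * (exp (-t) * t ^ (α - 1)) =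
      log b * Gamma α - deriv Gamma α := by
    rw [Gamma_eq_integral hα, (hasDerivAt_Gamma_eq_integral hα).deriv, ← integral_const_mul,
      ← integral_sub ((GammaIntegral_convergent hα).const_mul _)
        (integrableOn_log_mul_Gamma_integrand hα)]
    refine setIntegral_congr_fun measurableSet_Ioi fun t ht => ?_
    rw [log_div hb.ne' (ne_of_gt ht)]
    ring
  rw [integral_mul_invGammaPdf hα hb, hsplit, logDeriv_apply]
  field_simp [(Gamma_pos_of_pos hα).ne']

lemma inv_mul_invGammaPdf (hα : 0 < α) (hb : 0 < b) {x : ℝ} (hx : 0 < x) :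
    x⁻¹ * invGammaPdf α b x = α / b * invGammaPdf (α + 1) b x := by
  have hΓ := (Gamma_pos_of_pos hα).ne'
  rw [invGammaPdf, invGammaPdf, Gamma_add_one hα.ne', rpow_add_one hb.ne',
    show -(α + 1) - 1 = (-α - 1) + -1 by ring, rpow_add hx, rpow_neg_one]
  field_simp

lemma mul_inv_sub_mul_invGammaPdf (hα : 0 < α) (hb : 0 < b) (h : ℝ → ℝ) {x : ℝ} (hx : 0 < x) :
    h x * ((x⁻¹ - α / b) * invGammaPdf α b x) =
      α / b * (h x * invGammaPdf (α + 1) b x - h x * invGammaPdf α b x) := by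
  rw [sub_mul, inv_mul_invGammaPdf hα hb hx]
  ring

lemma integrableOn_mul_inv_sub_mul_invGammaPdf (hα : 0 < α) (hb : 0 < b) {h : ℝ → ℝ}
    (h₀ : IntegrableOn (fun x => h x * invGammaPdf α b x) (Ioi 0))
    (h₁ : IntegrableOn (fun x => h x * invGammaPdf (α + 1) b x) (Ioi 0)) :
    IntegrableOn (fun x => h x * ((x⁻¹ - α / b) * invGammaPdf α b x)) (Ioi 0) :=
  IntegrableOn.congr_fun ((h₁.sub h₀).const_mul (α / b))
    (fun _ hx => (mul_inv_sub_mul_invGammaPdf hα hb h hx).symm) measurableSet_Ioi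

lemma integral_mul_inv_sub_mul_invGammaPdf (hα : 0 < α) (hb : 0 < b) {h : ℝ → ℝ}
    (h₀ : IntegrableOn (fun x => h x * invGammaPdf α b x) (Ioi 0))
    (h₁ : IntegrableOn (fun x => h x * invGammaPdf (α + 1) b x) (Ioi 0)) :
    ∫ x in Ioi 0, h x * ((x⁻¹ - α / b) * invGammaPdf α b x) =
      α / b * ((∫ x in Ioi 0, h x * invGammaPdf (α + 1) b x) -
        ∫ x in Ioi 0, h x * invGammaPdf α b x) := by
  rw [setIntegral_congr_fun measurableSet_Ioi fun x hx => mul_inv_sub_mul_invGammaPdf hα hb h hx,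
    integral_const_mul, integral_sub h₁ h₀]

lemma affine_mul_invGammaPdf (hα : 0 < α) (hb : 0 < b) (k u v : ℝ) {x : ℝ} (hx : 0 < x) :
    (k + u * log x + v * x⁻¹) * invGammaPdf α b x =
      k * invGammaPdf α b x + u * (log x * invGammaPdf α b x) +
        v * (α / b) * invGammaPdf (α + 1) b x := by
  rw [add_mul, mul_assoc v x⁻¹, inv_mul_invGammaPdf hα hb hx]
  ring

lemma integrableOn_affine_mul_invGammaPdf (hα : 0 < α) (hb : 0 < b) (k u v : ℝ) :
    IntegrableOn (fun x => (k + u * log x + v * x⁻¹) * invGammaPdf α b x) (Ioi 0) :=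
  IntegrableOn.congr_fun ((((integrableOn_invGammaPdf hα hb).const_mul k).add
    ((integrableOn_log_mul_invGammaPdf hα hb).const_mul u)).add
    ((integrableOn_invGammaPdf (α := α + 1) (by linarith) hb).const_mul (v * (α / b))))
    (fun _ hx => (affine_mul_invGammaPdf hα hb k u v hx).symm) measurableSet_Ioi

lemma integral_affine_mul_invGammaPdf (hα : 0 < α) (hb : 0 < b) (k u v : ℝ) :
    ∫ x in Ioi 0, (k + u * log x + v * x⁻¹) * invGammaPdf α b x =
      k + u * (log b - logDeriv Gamma α) + v * (α / b) := by
  have hα₁ : 0 < α + 1 := by linarith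
  have hk := (integrableOn_invGammaPdf hα hb).const_mul k
  have hu := (integrableOn_log_mul_invGammaPdf hα hb).const_mul u
  have hv := (integrableOn_invGammaPdf hα₁ hb).const_mul (v * (α / b))
  rw [setIntegral_congr_fun measurableSet_Ioi fun x hx => affine_mul_invGammaPdf hα hb k u v hx,
    integral_add (hk.fun_add hu) hv, integral_add hk hu, integral_const_mul, integral_const_mul,
    integral_const_mul, integral_invGammaPdf hα hb, integral_invGammaPdf hα₁ hb,
    integral_log_mul_invGammaPdf hα hb]
  ring

lemma integrableOn_inv_sub_mul_invGammaPdf (hα : 0 < α) (hb : 0 < b) :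
    IntegrableOn (fun x => (x⁻¹ - α / b) * invGammaPdf α b x) (Ioi 0) := by
  simpa using integrableOn_mul_inv_sub_mul_invGammaPdf (h := fun _ => 1) hα hb
    (by simpa using integrableOn_invGammaPdf hα hb)
    (by simpa using integrableOn_invGammaPdf (by linarith) hb)

lemma integral_inv_sub_mul_invGammaPdf (hα : 0 < α) (hb : 0 < b) :
    ∫ x in Ioi 0, (x⁻¹ - α / b) * invGammaPdf α b x = 0 := by
  simpa [integral_invGammaPdf hα hb, integral_invGammaPdf (by linarith : 0 < α + 1) hb] using
    integral_mul_inv_sub_mul_invGammaPdf (h := fun _ => 1) hα hb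
    (by simpa using integrableOn_invGammaPdf hα hb)
    (by simpa using integrableOn_invGammaPdf (by linarith) hb)

lemma integrableOn_affine_mul_inv_sub_mul_invGammaPdf (hα : 0 < α) (hb : 0 < b) (k u v : ℝ) :
    IntegrableOn (fun x => (k + u * log x + v * x⁻¹) * ((x⁻¹ - α / b) * invGammaPdf α b x))
      (Ioi 0) :=
  integrableOn_mul_inv_sub_mul_invGammaPdf (h := fun x => k + u * log x + v * x⁻¹) hα hb
    (integrableOn_affine_mul_invGammaPdf hα hb k u v)
    (integrableOn_affine_mul_invGammaPdf (by linarith) hb k u v)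

lemma integral_affine_mul_inv_sub_mul_invGammaPdf (hα : 0 < α) (hb : 0 < b) (k u v : ℝ) :
    ∫ x in Ioi 0, (k + u * log x + v * x⁻¹) * ((x⁻¹ - α / b) * invGammaPdf α b x) =
      v * α / b ^ 2 - u / b := by
  have hα₁ : 0 < α + 1 := by linarith
  rw [integral_mul_inv_sub_mul_invGammaPdf (h := fun x => k + u * log x + v * x⁻¹) hα hb
    (integrableOn_affine_mul_invGammaPdf hα hb k u v)
    (integrableOn_affine_mul_invGammaPdf hα₁ hb k u v),
    integral_affine_mul_invGammaPdf hα hb, integral_affine_mul_invGammaPdf hα₁ hb,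
    logDeriv_Gamma_add_one hα]
  field_simp
  ring

end InverseGamma

section Independence

variable {X Y : Type*} [MeasurableSpace X] [MeasurableSpace Y] {μ : Measure X} {ν : Measure Y}

lemma integral_integral_add_mul_add {p a c : X → ℝ} {q a' c' : Y → ℝ}
    (hp : Integrable p μ) (hcp : Integrable (fun x => c x * p x) μ)
    (hacp : Integrable (fun x => a x * (c x * p x)) μ) (hq : Integrable q ν)
    (ha'q : Integrable (fun y => a' y * q y) ν) (hc'q : Integrable (fun y => c' y * q y) ν)
    (ha'c'q : Integrable (fun y => a' y * (c' y * q y)) ν)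
    (hp₁ : ∫ x, p x ∂μ = 1) (hq₁ : ∫ y, q y ∂ν = 1)
    (hcp₀ : ∫ x, c x * p x ∂μ = 0) (hc'q₀ : ∫ y, c' y * q y ∂ν = 0) :
    ∫ x, ∫ y, (a x + a' y) * (c x + c' y) * (p x * q y) ∂ν ∂μ =
      ∫ x, a x * (c x * p x) ∂μ + ∫ y, a' y * (c' y * q y) ∂ν := by
  set K := ∫ y, a' y * q y ∂ν
  set L := ∫ y, a' y * (c' y * q y) ∂ν
  have hinner : ∀ x, ∫ y, (a x + a' y) * (c x + c' y) * (p x * q y) ∂ν =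
      a x * (c x * p x) + K * (c x * p x) + L * p x := by
    intro x
    have hsplit : (fun y => (a x + a' y) * (c x + c' y) * (p x * q y)) = fun y =>
        a x * (c x * p x) * q y + a x * p x * (c' y * q y) + c x * p x * (a' y * q y) +
          p x * (a' y * (c' y * q y)) := by
      funext y; ring
    rw [hsplit, integral_add (((hq.const_mul _).fun_add (hc'q.const_mul _)).fun_add
      (ha'q.const_mul _)) (ha'c'q.const_mul _), integral_add ((hq.const_mul _).fun_add
      (hc'q.const_mul _)) (ha'q.const_mul _), integral_add (hq.const_mul _) (hc'q.const_mul _),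
      integral_const_mul, integral_const_mul, integral_const_mul, integral_const_mul, hq₁, hc'q₀]
    ring
  simp_rw [hinner]
  rw [integral_add (hacp.fun_add (hcp.const_mul K)) (hp.const_mul L), integral_add hacp
    (hcp.const_mul K), integral_const_mul, integral_const_mul, hcp₀, hp₁]
  ring

end Independence

lemma integral_integral_affine_mul_inv_sub_mul_invGammaPdf {α₁ α₂ b : ℝ} (h₁ : 0 < α₁)
    (h₂ : 0 < α₂) (hb : 0 < b) (k u v k' u' v' : ℝ) :
    ∫ x₁ in Ioi 0, ∫ x₂ in Ioi 0,
        ((k + u * log x₁ + v * x₁⁻¹) + (k' + u' * log x₂ + v' * x₂⁻¹)) *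
          ((x₁⁻¹ - α₁ / b) + (x₂⁻¹ - α₂ / b)) * (invGammaPdf α₁ b x₁ * invGammaPdf α₂ b x₂) =
      (v * α₁ + v' * α₂) / b ^ 2 - (u + u') / b := by
  rw [integral_integral_add_mul_add (a := fun x => k + u * log x + v * x⁻¹)
    (a' := fun x => k' + u' * log x + v' * x⁻¹) (c := fun x => x⁻¹ - α₁ / b)
    (c' := fun x => x⁻¹ - α₂ / b) (integrableOn_invGammaPdf h₁ hb)
    (integrableOn_inv_sub_mul_invGammaPdf h₁ hb)
    (integrableOn_affine_mul_inv_sub_mul_invGammaPdf h₁ hb k u v)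
    (integrableOn_invGammaPdf h₂ hb) (integrableOn_affine_mul_invGammaPdf h₂ hb k' u' v')
    (integrableOn_inv_sub_mul_invGammaPdf h₂ hb)
    (integrableOn_affine_mul_inv_sub_mul_invGammaPdf h₂ hb k' u' v')
    (integral_invGammaPdf h₁ hb) (integral_invGammaPdf h₂ hb)
    (integral_inv_sub_mul_invGammaPdf h₁ hb) (integral_inv_sub_mul_invGammaPdf h₂ hb),
    integral_affine_mul_inv_sub_mul_invGammaPdf h₁ hb,
    integral_affine_mul_inv_sub_mul_invGammaPdf h₂ hb]
  ring

section LogLikelihood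

variable {α₁ α₂ lam x₁ x₂ : ℝ}

lemma log_invGammaPdf {α b x : ℝ} (hα : 0 < α) (hb : 0 < b) (hx : 0 < x) :
    log (invGammaPdf α b x) = α * log b - log (Gamma α) - (α + 1) * log x - b / x := by
  have hΓ := Gamma_pos_of_pos hα
  rw [invGammaPdf, log_mul (by positivity) (exp_pos _).ne', log_mul (by positivity)
    (rpow_pos_of_pos hx _).ne', log_div (rpow_pos_of_pos hb _).ne' hΓ.ne', log_exp,
    log_rpow hb, log_rpow hx]
  ring

lemma invGammaLbar_eq (h₁ : 0 < α₁) (h₂ : 0 < α₂) (hlam : 0 < lam) (hx₁ : 0 < x₁)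
    (hx₂ : 0 < x₂) :
    invGammaLbar α₁ α₂ lam x₁ x₂ = (α₁ + α₂) * log ((α₁ + α₂) / lam) - log (Gamma α₁) -
      log (Gamma α₂) - (α₁ + 1) * log x₁ - (α₂ + 1) * log x₂ -
        (α₁ + α₂) / lam * (x₁⁻¹ + x₂⁻¹) := by
  have hb : 0 < (α₁ + α₂) / lam := by positivity
  rw [invGammaLbar, log_invGammaPdf h₁ hb hx₁, log_invGammaPdf h₂ hb hx₂]
  ring

lemma invGammaLbar_comm : invGammaLbar α₁ α₂ lam x₁ x₂ = invGammaLbar α₂ α₁ lam x₂ x₁ := by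
  rw [invGammaLbar, invGammaLbar, add_comm α₂, add_comm]

lemma exp_invGammaLbar (h₁ : 0 < α₁) (h₂ : 0 < α₂) (hlam : 0 < lam) (hx₁ : 0 < x₁)
    (hx₂ : 0 < x₂) :
    exp (invGammaLbar α₁ α₂ lam x₁ x₂) =
      invGammaPdf α₁ ((α₁ + α₂) / lam) x₁ * invGammaPdf α₂ ((α₁ + α₂) / lam) x₂ := by
  have hb : 0 < (α₁ + α₂) / lam := by positivity
  rw [invGammaLbar, exp_add, exp_log (invGammaPdf_pos h₁ hb hx₁),
    exp_log (invGammaPdf_pos h₂ hb hx₂)]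

lemma hasDerivAt_invGammaLbar_fst (h₁ : 0 < α₁) (h₂ : 0 < α₂) (hlam : 0 < lam)
    (hx₁ : 0 < x₁) (hx₂ : 0 < x₂) :
    HasDerivAt (fun a => invGammaLbar a α₂ lam x₁ x₂)
      (log ((α₁ + α₂) / lam) + 1 - logDeriv Gamma α₁ - log x₁ - (x₁⁻¹ + x₂⁻¹) / lam) α₁ := by
  have hb : 0 < (α₁ + α₂) / lam := by positivity
  have hsum := (hasDerivAt_id α₁).add_const α₂
  have hφ := (((((hsum.mul ((hsum.div_const lam).log hb.ne')).sub
    (hasDerivAt_log_Gamma h₁)).sub_const (log (Gamma α₂))).sub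
    (((hasDerivAt_id α₁).add_const 1).mul_const (log x₁))).sub_const ((α₂ + 1) * log x₂)).sub
    ((hsum.div_const lam).mul_const (x₁⁻¹ + x₂⁻¹))
  refine (hφ.congr_deriv ?_).congr_of_eventuallyEq ?_
  · simp only [id]
    field_simp
  · filter_upwards [Ioi_mem_nhds h₁] with a ha using invGammaLbar_eq ha h₂ hlam hx₁ hx₂

lemma hasDerivAt_invGammaLbar_lam (h₁ : 0 < α₁) (h₂ : 0 < α₂) (hlam : 0 < lam)
    (hx₁ : 0 < x₁) (hx₂ : 0 < x₂) :
    HasDerivAt (fun L => invGammaLbar α₁ α₂ L x₁ x₂)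
      ((α₁ + α₂) / lam ^ 2 * (x₁⁻¹ + x₂⁻¹) - (α₁ + α₂) / lam) lam := by
  have hb : 0 < (α₁ + α₂) / lam := by positivity
  have hdiv := (hasDerivAt_const lam (α₁ + α₂)).fun_div (hasDerivAt_id' lam) hlam.ne'
  have hφ := ((((((hdiv.log hb.ne').const_mul (α₁ + α₂)).sub_const (log (Gamma α₁))).sub_const
    (log (Gamma α₂))).sub_const ((α₁ + 1) * log x₁)).sub_const ((α₂ + 1) * log x₂)).sub
    (hdiv.mul_const (x₁⁻¹ + x₂⁻¹))
  refine (hφ.congr_deriv ?_).congr_of_eventuallyEq ?_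
  · field_simp
    ring
  · filter_upwards [Ioi_mem_nhds hlam] with L hL using invGammaLbar_eq h₁ h₂ hL hx₁ hx₂

lemma hasDerivAt_invGammaLbar_snd (h₁ : 0 < α₁) (h₂ : 0 < α₂) (hlam : 0 < lam)
    (hx₁ : 0 < x₁) (hx₂ : 0 < x₂) :
    HasDerivAt (fun a => invGammaLbar α₁ a lam x₁ x₂)
      (log ((α₁ + α₂) / lam) + 1 - logDeriv Gamma α₂ - log x₂ - (x₁⁻¹ + x₂⁻¹) / lam) α₂ := by
  have h := hasDerivAt_invGammaLbar_fst h₂ h₁ hlam hx₂ hx₁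
  rw [add_comm α₂, add_comm x₂⁻¹] at h
  exact h.congr_of_eventuallyEq (.of_forall fun _ => invGammaLbar_comm)

lemma integral_integral_mul_deriv_lam_mul_exp (h₁ : 0 < α₁) (h₂ : 0 < α₂) (hlam : 0 < lam)
    {A : ℝ → ℝ → ℝ} (k u v k' u' v' : ℝ) (hA : ∀ x₁ > 0, ∀ x₂ > 0,
      A x₁ x₂ = (k + u * log x₁ + v * x₁⁻¹) + (k' + u' * log x₂ + v' * x₂⁻¹)) :
    ∫ x₁ in Ioi 0, ∫ x₂ in Ioi 0, A x₁ x₂ * deriv (fun L => invGammaLbar α₁ α₂ L x₁ x₂) lam *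
        exp (invGammaLbar α₁ α₂ lam x₁ x₂) =
      (v * α₁ + v' * α₂) / (α₁ + α₂) - (u + u') / lam := by
  set b := (α₁ + α₂) / lam with hb_def
  have hb : 0 < b := by positivity
  calc _ = ∫ x₁ in Ioi 0, ∫ x₂ in Ioi 0, b / lam *
        (((k + u * log x₁ + v * x₁⁻¹) + (k' + u' * log x₂ + v' * x₂⁻¹)) *
          ((x₁⁻¹ - α₁ / b) + (x₂⁻¹ - α₂ / b)) * (invGammaPdf α₁ b x₁ * invGammaPdf α₂ b x₂)) := by
        refine setIntegral_congr_fun measurableSet_Ioi fun x₁ hx₁ =>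
          setIntegral_congr_fun measurableSet_Ioi fun x₂ hx₂ => ?_
        rw [hA x₁ hx₁ x₂ hx₂, (hasDerivAt_invGammaLbar_lam h₁ h₂ hlam hx₁ hx₂).deriv,
          exp_invGammaLbar h₁ h₂ hlam hx₁ hx₂, hb_def]
        field_simp
        ring
    _ = b / lam * ((v * α₁ + v' * α₂) / b ^ 2 - (u + u') / b) := by
        simp_rw [integral_const_mul]
        rw [integral_integral_affine_mul_inv_sub_mul_invGammaPdf h₁ h₂ hb]
    _ = _ := by
        rw [hb_def]
        field_simp

end LogLikelihood

/-- For two independent inverse-Gamma samples sharing the scale `β`, the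
reparameterization `λ = (α₁ + α₂)/β` makes the shape parameters `α₁` and `α₂`
globally orthogonal to `λ`. -/
theorem stmt13 (α₁ α₂ lam : ℝ) (h₁ : 0 < α₁) (h₂ : 0 < α₂) (hlam : 0 < lam) :
    (∫ x₁ in Set.Ioi (0 : ℝ), ∫ x₂ in Set.Ioi (0 : ℝ),
        deriv (fun a => invGammaLbar a α₂ lam x₁ x₂) α₁ *
          deriv (fun L => invGammaLbar α₁ α₂ L x₁ x₂) lam *
          Real.exp (invGammaLbar α₁ α₂ lam x₁ x₂) = 0) ∧
    (∫ x₁ in Set.Ioi (0 : ℝ), ∫ x₂ in Set.Ioi (0 : ℝ),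
        deriv (fun a => invGammaLbar α₁ a lam x₁ x₂) α₂ *
          deriv (fun L => invGammaLbar α₁ α₂ L x₁ x₂) lam *
          Real.exp (invGammaLbar α₁ α₂ lam x₁ x₂) = 0) := by
  constructor
  · rw [integral_integral_mul_deriv_lam_mul_exp h₁ h₂ hlam
      (log ((α₁ + α₂) / lam) + 1 - logDeriv Gamma α₁) (-1) (-lam⁻¹) 0 0 (-lam⁻¹)
      fun x₁ hx₁ x₂ hx₂ => by rw [(hasDerivAt_invGammaLbar_fst h₁ h₂ hlam hx₁ hx₂).deriv]; ring]
    field_simp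
    ring
  · rw [integral_integral_mul_deriv_lam_mul_exp h₁ h₂ hlam 0 0 (-lam⁻¹)
      (log ((α₁ + α₂) / lam) + 1 - logDeriv Gamma α₂) (-1) (-lam⁻¹)
      fun x₁ hx₁ x₂ hx₂ => by rw [(hasDerivAt_invGammaLbar_snd h₁ h₂ hlam hx₁ hx₂).deriv]; ring]
    field_simp
    ring
end

section
/- Assume the pm×pm block Toeplitz matrix T is invertible and J ∈ ℝ^{m×m} is invertible, and let Φ̃_{p,1}, …, Φ̃_{p,p} ∈ ℝ^{m×m} satisfy the backward Yule–Walker equations. If for each u, v ∈ {1,…,m} the matrices D_1^{(u,v)}, …, D_p^{(u,v)} ∈ ℝ^{m×m} satisfy the orthogonality equations, then necessarily D_r^{(u,v)} = E_{u,v} Φ̃_{p,p+1−r} for all r = 1,…,p and u,v = 1,…,m; that is, the orthogonality equations uniquely determine the partial derivative matrices ∂Φ_{p+1,r}/∂(Φ_{p+1,p+1})_{(u,v)}. -/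
/-!
For fixed `u, v`, stack row `k` of `D_1^{(u,v)}, …, D_p^{(u,v)}` into a vector `x_k` of length
`pm`. The orthogonality equations at `s` say that the vector `k ↦ (x_k T)_{(s,j)}`, multiplied by
`J`, is a prescribed vector. They are affine in `D`, and since `J` and `T` are invertible they
have at most one solution; the backward Yule–Walker equations show that
`D_r^{(u,v)} = E_{u,v} Φ̃_{p,p+1−r}` is one.
-/

open scoped Matrix

/-- `Φ̃_{p,1}, …, Φ̃_{p,p}` satisfy the backward Yule–Walker equations:
`∑_{r=1}^p ∑_ℓ (Φ̃_{p,p+1−r})_{(i,ℓ)} (Γ_{s−r})_{(ℓ,j)} = −(Γ_{s−p−1})_{(i,j)}`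
for all `s = 1,…,p` and `i,j = 1,…,m`. -/
def BackwardYW (m p : ℕ) (Γ : ℤ → Matrix (Fin m) (Fin m) ℝ)
    (Φt : ℕ → Matrix (Fin m) (Fin m) ℝ) : Prop :=
  ∀ s ∈ Finset.Icc 1 p, ∀ i j : Fin m,
    ∑ r ∈ Finset.Icc 1 p, ∑ ℓ : Fin m,
      Φt (p + 1 - r) i ℓ * Γ ((s : ℤ) - (r : ℤ)) ℓ j
    = -Γ ((s : ℤ) - (p : ℤ) - 1) i j

/-- The family `(D_r^{(u,v)})` satisfies the orthogonality equations:
`∑_{r=1}^p ∑_k ∑_ℓ J_{(k,i)} (Γ_{s−r})_{(ℓ,j)} (D_r^{(u,v)})_{(k,ℓ)}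
  = −J_{(u,i)} (Γ_{s−p−1})_{(v,j)}`
for all `s = 1,…,p` and `i,j,u,v = 1,…,m`. -/
def OrthogonalityEqs (m p : ℕ) (Γ : ℤ → Matrix (Fin m) (Fin m) ℝ)
    (J : Matrix (Fin m) (Fin m) ℝ)
    (D : ℕ → Fin m → Fin m → Matrix (Fin m) (Fin m) ℝ) : Prop :=
  ∀ s ∈ Finset.Icc 1 p, ∀ i j u v : Fin m,
    ∑ r ∈ Finset.Icc 1 p, ∑ k : Fin m, ∑ ℓ : Fin m,
      J k i * Γ ((s : ℤ) - (r : ℤ)) ℓ j * D r u v k ℓ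
    = -(J u i * Γ ((s : ℤ) - (p : ℤ) - 1) v j)

theorem Finset.sum_Icc_one_eq_sum_fin {M : Type*} [AddCommMonoid M] (p : ℕ) (f : ℕ → M) :
    ∑ r ∈ Finset.Icc 1 p, f r = ∑ a : Fin p, f (a + 1) := by
  rw [Fin.sum_univ_eq_sum_range (fun a => f (a + 1)), ← Finset.Ico_add_one_right_eq_Icc,
    Finset.sum_Ico_eq_sum_range]
  simp [add_comm]

section BlockToeplitz

variable {R : Type*} [CommRing R] {m : ℕ}

def blockToeplitz (p : ℕ) (Γ : ℤ → Matrix (Fin m) (Fin m) R) :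
    Matrix (Fin p × Fin m) (Fin p × Fin m) R :=
  Matrix.of fun a b => Γ ((b.1 : ℤ) - (a.1 : ℤ)) a.2 b.2

/-- Row `k` of the `m × pm` block row `[A₁ ⋯ A_p]`. -/
def stackedRow (p : ℕ) (A : ℕ → Matrix (Fin m) (Fin m) R) (k : Fin m) : Fin p × Fin m → R :=
  fun q => A (q.1 + 1) k q.2

theorem vecMul_blockToeplitz_apply (p : ℕ) (Γ : ℤ → Matrix (Fin m) (Fin m) R)
    (x : Fin p × Fin m → R) (b : Fin p) (j : Fin m) :
    (x ᵥ* blockToeplitz p Γ) (b, j) = ∑ a : Fin p, ∑ ℓ, x (a, ℓ) * Γ ((b : ℤ) - a) ℓ j := by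
  simp [Matrix.vecMul, dotProduct, Fintype.sum_prod_type, blockToeplitz]

end BlockToeplitz

variable {m p : ℕ} {Γ : ℤ → Matrix (Fin m) (Fin m) ℝ} {J : Matrix (Fin m) (Fin m) ℝ}
  {D D' : ℕ → Fin m → Fin m → Matrix (Fin m) (Fin m) ℝ}

theorem orthogonalityEqs_single_mul {Φt : ℕ → Matrix (Fin m) (Fin m) ℝ}
    (hYW : BackwardYW m p Γ Φt) :
    OrthogonalityEqs m p Γ J fun r u v => Matrix.single u v 1 * Φt (p + 1 - r) := by
  intro s hs i j u v
  dsimp only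
  rw [← mul_neg, ← hYW s hs v j, Finset.mul_sum]
  refine Finset.sum_congr rfl fun r _ => ?_
  rw [Finset.sum_eq_single u (fun k _ hk => by simp [Matrix.single_mul_apply_of_ne (h := hk)])
    (by simp), Finset.mul_sum]
  refine Finset.sum_congr rfl fun ℓ _ => ?_
  rw [Matrix.single_mul_apply_same, one_mul]
  ring

/-- The orthogonality equations at `s = b + 1`, in matrix form. -/
theorem OrthogonalityEqs.vecMul_eq (hD : OrthogonalityEqs m p Γ J D) (u v : Fin m) (b : Fin p)
    (j : Fin m) :
    (fun k => (stackedRow p (D · u v) k ᵥ* blockToeplitz p Γ) (b, j)) ᵥ* J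
      = -(Γ ((b : ℤ) - p) v j • J u) := by
  funext i
  have h := hD (b + 1) (Finset.mem_Icc.mpr ⟨by omega, b.2⟩) i j u v
  rw [Finset.sum_Icc_one_eq_sum_fin] at h
  push_cast at h
  simp only [add_sub_add_right_eq_sub, sub_right_comm _ _ (1 : ℤ), add_sub_cancel_right] at h
  simp only [vecMul_blockToeplitz_apply]
  simp only [Matrix.vecMul, dotProduct, stackedRow, Pi.neg_apply, Pi.smul_apply, smul_eq_mul]
  rw [mul_comm, ← h, Finset.sum_comm]
  simp only [Finset.sum_mul]
  refine Finset.sum_congr rfl fun a _ => Finset.sum_congr rfl fun k _ =>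
    Finset.sum_congr rfl fun ℓ _ => by ring

theorem OrthogonalityEqs.eq_of_isUnit (hT : IsUnit (blockToeplitz p Γ)) (hJ : IsUnit J)
    (hD : OrthogonalityEqs m p Γ J D) (hD' : OrthogonalityEqs m p Γ J D') :
    ∀ r ∈ Finset.Icc 1 p, D r = D' r := by
  have hrow : ∀ u v k, stackedRow p (D · u v) k = stackedRow p (D' · u v) k := by
    intro u v k
    refine Matrix.vecMul_injective_iff_isUnit.mpr hT (funext fun ⟨b, j⟩ => ?_)
    exact congrFun (Matrix.vecMul_injective_iff_isUnit.mpr hJ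
      ((hD.vecMul_eq u v b j).trans (hD'.vecMul_eq u v b j).symm)) k
  intro r hr
  obtain ⟨hr1, hrp⟩ := Finset.mem_Icc.mp hr
  ext u v k ℓ
  simpa [stackedRow, Nat.sub_add_cancel hr1] using
    congrFun (hrow u v k) (⟨r - 1, by omega⟩, ℓ)

theorem stmt15_general {m p : ℕ}
    (Γ : ℤ → Matrix (Fin m) (Fin m) ℝ)
    (hT : IsUnit (Matrix.of fun a b : Fin p × Fin m =>
      Γ ((b.1 : ℤ) - (a.1 : ℤ)) a.2 b.2))
    (J : Matrix (Fin m) (Fin m) ℝ) (hJ : IsUnit J)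
    (Φt : ℕ → Matrix (Fin m) (Fin m) ℝ)
    (hYW : BackwardYW m p Γ Φt)
    (D : ℕ → Fin m → Fin m → Matrix (Fin m) (Fin m) ℝ)
    (hD : OrthogonalityEqs m p Γ J D) :
    ∀ r ∈ Finset.Icc 1 p, ∀ u v : Fin m,
      D r u v = Matrix.single u v (1 : ℝ) * Φt (p + 1 - r) := by
  intro r hr u v
  rw [hD.eq_of_isUnit hT hJ (orthogonalityEqs_single_mul hYW) r hr]

/-- If the block Toeplitz matrix `T` (with `(a,b)`-th block `Γ_{b−a}`) and `J` are
invertible and `Φ̃_{p,1}, …, Φ̃_{p,p}` satisfy the backward Yule–Walker equations,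
then any family `(D_r^{(u,v)})` satisfying the orthogonality equations must equal
`D_r^{(u,v)} = E_{u,v} Φ̃_{p,p+1−r}`. -/
theorem stmt15 {m p : ℕ} (hm : 1 ≤ m) (hp : 1 ≤ p)
    (Γ : ℤ → Matrix (Fin m) (Fin m) ℝ)
    (hT : IsUnit (Matrix.of fun a b : Fin p × Fin m =>
      Γ ((b.1 : ℤ) - (a.1 : ℤ)) a.2 b.2))
    (J : Matrix (Fin m) (Fin m) ℝ) (hJ : IsUnit J)
    (Φt : ℕ → Matrix (Fin m) (Fin m) ℝ)
    (hYW : BackwardYW m p Γ Φt)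
    (D : ℕ → Fin m → Fin m → Matrix (Fin m) (Fin m) ℝ)
    (hD : OrthogonalityEqs m p Γ J D) :
    ∀ r ∈ Finset.Icc 1 p, ∀ u v : Fin m,
      D r u v = Matrix.single u v (1 : ℝ) * Φt (p + 1 - r) :=
  stmt15_general Γ hT J hJ Φt hYW D hD
end
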